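/- Let X_R and X_C be real n×n matrices with X_R symmetric and X_C antisymmetric. Then the Hermitian matrix X := X_R + i·X_C ∈ M_n(ℂ) is positive semidefinite if and only if the real symmetric 2n×2n block matrix [[X_R, −X_C], [X_C, X_R]] is positive semidefinite. -/

import Mathlib

/-!
Writing `z = a + i b` with `a b` real, the real part of `z* (A + i B) z` is, for arbitrary real
`A B`, the quadratic form of `[[A, -B], [B, A]]` at `(a, b)`. When `A` is symmetric and `B`
antisymmetric both matrices are Hermitian, so `z* (A + i B) z` is real, and `z ↦ (a, b)` is onto
`ℝⁿ ⊕ ℝⁿ`; hence the two quadratic forms are nonnegative together.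
-/

open scoped ComplexOrder Matrix

namespace Matrix

variable {n : Type*}

def realifyVec (z : n → ℂ) : n ⊕ n → ℝ :=
  Sum.elim (fun i => (z i).re) (fun i => (z i).im)

theorem realifyVec_surjective : Function.Surjective (realifyVec (n := n)) :=
  fun x => ⟨fun i => ⟨x (.inl i), x (.inr i)⟩, by ext (i | i) <;> rfl⟩

theorem re_star_dotProduct_mulVec_realifyVec [Fintype n] (A B : Matrix n n ℝ) (z : n → ℂ) :
    (star z ⬝ᵥ (A.map Complex.ofReal + Complex.I • B.map Complex.ofReal) *ᵥ z).re =
      realifyVec z ⬝ᵥ fromBlocks A (-B) B A *ᵥ realifyVec z := by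
  simp only [dotProduct, mulVec, realifyVec, Fintype.sum_sum_type, fromBlocks_apply₁₁,
    fromBlocks_apply₁₂, fromBlocks_apply₂₁, fromBlocks_apply₂₂, Sum.elim_inl, Sum.elim_inr,
    Complex.re_sum, Finset.mul_sum, ← Finset.sum_add_distrib]
  refine Finset.sum_congr rfl fun i _ => Finset.sum_congr rfl fun j _ => ?_
  simp [Complex.mul_re, Complex.mul_im]
  ring

theorem isHermitian_map_ofReal_add_I_smul {A B : Matrix n n ℝ} (hA : A.IsSymm)
    (hB : Bᵀ = -B) : (A.map Complex.ofReal + Complex.I • B.map Complex.ofReal).IsHermitian := by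
  ext i j
  have hBji : B j i = -B i j := by simpa using congr_fun (congr_fun hB i) j
  simp [hA.apply i j, hBji]

theorem isHermitian_fromBlocks_neg {A B : Matrix n n ℝ} (hA : A.IsSymm) (hB : Bᵀ = -B) :
    (fromBlocks A (-B) B A).IsHermitian :=
  isHermitian_iff_isSymm.mpr <| hA.fromBlocks (by rw [transpose_neg, hB, neg_neg]) hA

end Matrix

open Matrix in
theorem complex_posSemidef_iff_realification (n : ℕ)
    (XR XC : Matrix (Fin n) (Fin n) ℝ)
    (hR : XR.IsSymm) (hC : XC.transpose = -XC) :
    (XR.map Complex.ofReal + Complex.I • XC.map Complex.ofReal).PosSemidef ↔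
      (Matrix.fromBlocks XR (-XC) XC XR).PosSemidef := by
  have hX := isHermitian_map_ofReal_add_I_smul hR hC
  simp only [posSemidef_iff_dotProduct_mulVec, hX, isHermitian_fromBlocks_neg hR hC, true_and,
    RCLike.nonneg_iff (K := ℂ), hX.im_star_dotProduct_mulVec_self, and_true, star_trivial,
    RCLike.re_to_complex, re_star_dotProduct_mulVec_realifyVec]
  exact (realifyVec_surjective.forall
    (p := fun x => 0 ≤ x ⬝ᵥ fromBlocks XR (-XC) XC XR *ᵥ x)).symm
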